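/- arXiv:2311.14648 — 6 statements merged into one kernel-verified Lean document; each statement's English description precedes it below -/
import Mathlib

section
/- Let Y be a finite set, p a probability distribution on Y, Π a partition of Y, and q = p^Π the Π-coarsening of p (q(y) = p(B)/|B| for y in block B). Then for any subset S ⊆ Y, p(S) - q(S) ≤ ∑_{B ∈ Π, S∩B ≠ ∅} (p(S ∩ B)/|S ∩ B|) · |B \ S|. -/
open Finset

/-- A partition of a finite type `Y`, given as the map sending each element to its block. -/
def IsBlockFun {Y : Type*} [Fintype Y] (π : Y → Finset Y) : Prop :=
  (∀ y, y ∈ π y) ∧ ∀ y z, z ∈ π y → π z = π y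

/-- The `π`-coarsening of `p`: each element gets the average of `p` over its block. -/
noncomputable def coarsen {Y : Type*} [Fintype Y] (p : Y → ℝ) (π : Y → Finset Y) (y : Y) : ℝ :=
  (∑ z ∈ π y, p z) / (π y).card

lemma key_ineq (a pB m n : ℝ) (ha : 0 ≤ a) (hapB : a ≤ pB) (hm : 0 < m) (hmn : m ≤ n) :
    a - m * (pB / n) ≤ a / m * (n - m) := by
  have hn : 0 < n := lt_of_lt_of_le hm hmn
  rw [div_mul_eq_mul_div, ← mul_div_assoc, sub_le_iff_le_add,
    div_add_div _ _ hm.ne' hn.ne', le_div_iff₀ (mul_pos hm hn)]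
  nlinarith [mul_nonneg ha (sq_nonneg (n - m)), mul_le_mul_of_nonneg_left hapB (sq_nonneg m)]

theorem stmt2 {Y : Type*} [Fintype Y] [DecidableEq Y] (p : Y → ℝ) (π : Y → Finset Y)
    (hπ : IsBlockFun π) (hp : ∀ y, 0 ≤ p y) (hp1 : ∑ y, p y = 1)
    (S : Finset Y) :
    (∑ y ∈ S, p y) - ∑ y ∈ S, coarsen p π y ≤
      ∑ B ∈ (Finset.univ.image π).filter (fun B => (S ∩ B).Nonempty),
        ((∑ y ∈ S ∩ B, p y) / (S ∩ B).card) * (B \ S).card := by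
  classical
  have hbl : ∀ B ∈ Finset.univ.image π, ∀ y ∈ B, π y = B := by
    intro B hB y hy
    simp only [mem_image, mem_univ, true_and] at hB
    obtain ⟨z, rfl⟩ := hB
    exact hπ.2 z y hy
  have hdisj2 : ((Finset.univ.image π : Finset (Finset Y)) : Set (Finset Y)).PairwiseDisjoint
      (fun B => S ∩ B) := by
    intro B hB C hC hne
    simp only [Function.onFun]
    rw [Finset.disjoint_left]
    intro y hyB hyC
    exact hne (((hbl B hB y (mem_inter.mp hyB).2).symm).trans
      (hbl C hC y (mem_inter.mp hyC).2))
  have hbiU : (Finset.univ.image π).biUnion (fun B => S ∩ B) = S := by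
    ext y
    simp only [mem_biUnion, mem_inter, mem_image, mem_univ, true_and]
    constructor
    · rintro ⟨B, _, hyS, _⟩; exact hyS
    · intro hy; exact ⟨π y, ⟨y, rfl⟩, hy, hπ.1 y⟩
  have hpart : ∀ f : Y → ℝ, ∑ y ∈ S, f y = ∑ B ∈ Finset.univ.image π, ∑ y ∈ S ∩ B, f y := by
    intro f
    conv_lhs => rw [← hbiU]
    exact Finset.sum_biUnion hdisj2
  rw [hpart p, hpart (coarsen p π), ← Finset.sum_sub_distrib, Finset.sum_filter]
  apply Finset.sum_le_sum
  intro B hB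
  have hsub : S ∩ B ⊆ B := inter_subset_right
  have hc : ∀ y ∈ S ∩ B, coarsen p π y = (∑ z ∈ B, p z) / B.card := by
    intro y hy
    unfold coarsen
    rw [hbl B hB y (mem_inter.mp hy).2]
  rw [Finset.sum_congr rfl hc, Finset.sum_const, nsmul_eq_mul]
  by_cases hne : (S ∩ B).Nonempty
  · simp only [hne, if_true]
    have ha : 0 ≤ ∑ y ∈ S ∩ B, p y := Finset.sum_nonneg fun y _ => hp y
    have hapB : ∑ y ∈ S ∩ B, p y ≤ ∑ z ∈ B, p z :=
      Finset.sum_le_sum_of_subset_of_nonneg hsub (fun y _ _ => hp y)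
    have hm : 0 < ((S ∩ B).card : ℝ) := by
      exact_mod_cast Finset.card_pos.mpr hne
    have hmn : ((S ∩ B).card : ℝ) ≤ (B.card : ℝ) := by
      exact_mod_cast Finset.card_le_card hsub
    have hBS : B \ S = B \ (S ∩ B) := by
      ext y; simp only [mem_sdiff, mem_inter]; tauto
    have hcard : ((B \ S).card : ℝ) = (B.card : ℝ) - ((S ∩ B).card : ℝ) := by
      rw [hBS, Finset.card_sdiff_of_subset hsub]
      exact_mod_cast Nat.cast_sub (Finset.card_le_card hsub)
    rw [hcard]
    exact key_ineq _ _ _ _ ha hapB hm hmn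
  · simp only [hne, if_false]
    rw [Finset.not_nonempty_iff_eq_empty] at hne
    simp [hne]
end

section
/- Let Y be a finite set and ν a probability distribution over probability distributions p on Y. Let S ⊆ Y and let Π be a fixed partition of Y, with p^Π the Π-coarsening of p. Then E_{p∼ν}[max(p(S) - p^Π(S), 0)] ≤ |Y \ S| · max_{y ∈ S} E_{p∼ν}[p(y)]. -/
open Finset

lemma lemA {Y : Type*} [Fintype Y] [DecidableEq Y]
    (p : Y → ℝ) (π : Y → Finset Y) (hπ : IsBlockFun π) (z : Y) :
    ∑ y, (if z ∈ π y then p z / (π y).card else 0) = p z := by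
  have hmem : ∀ y, z ∈ π y ↔ y ∈ π z := by
    intro y
    constructor
    · intro h; rw [hπ.2 y z h]; exact hπ.1 y
    · intro h; rw [hπ.2 z y h]; exact hπ.1 z
  have h1 : ∀ y, (if z ∈ π y then p z / (π y).card else 0)
      = if y ∈ π z then p z / (π z).card else 0 := by
    intro y
    by_cases h : z ∈ π y
    · rw [if_pos h, if_pos ((hmem y).1 h), hπ.2 y z h]
    · rw [if_neg h, if_neg (fun hy => h ((hmem y).2 hy))]
  simp_rw [h1]
  rw [Finset.sum_ite_mem, Finset.univ_inter, Finset.sum_const, nsmul_eq_mul]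
  have hcard : ((π z).card : ℝ) ≠ 0 := by
    have : 0 < (π z).card := Finset.card_pos.2 ⟨z, hπ.1 z⟩
    exact_mod_cast this.ne'
  field_simp

theorem stmt3 {ι Y : Type*} [Fintype ι] [Fintype Y] [DecidableEq Y]
    (w : ι → ℝ) (hw : ∀ i, 0 ≤ w i) (hw1 : ∑ i, w i = 1)
    (p : ι → Y → ℝ) (hp : ∀ i y, 0 ≤ p i y) (hp1 : ∀ i, ∑ y, p i y = 1)
    (π : Y → Finset Y) (hπ : IsBlockFun π)
    (S : Finset Y) (hS : S.Nonempty) :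
    ∑ i, w i * max ((∑ y ∈ S, p i y) - ∑ y ∈ S, coarsen (p i) π y) 0 ≤
      ((Sᶜ : Finset Y).card : ℝ) * S.sup' hS (fun y => ∑ i, w i * p i y) := by
  classical
  set M := S.sup' hS (fun y => ∑ i, w i * p i y) with hMdef
  have hM0 : 0 ≤ M := by
    obtain ⟨y0, hy0⟩ := hS
    refine le_trans ?_ (Finset.le_sup' _ hy0)
    exact Finset.sum_nonneg fun i _ => mul_nonneg (hw i) (hp i y0)
  have hMy : ∀ y ∈ S, ∑ i, w i * p i y ≤ M := fun y hy => Finset.le_sup' (fun y => ∑ i, w i * p i y) hy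
  set q : ι → Y → ℝ := fun i y => (∑ z ∈ π y ∩ S, p i z) / (π y).card with hqdef
  have hq0 : ∀ i y, 0 ≤ q i y := fun i y =>
    div_nonneg (Finset.sum_nonneg fun z _ => hp i z) (by positivity)
  have hcoarse : ∀ (i : ι) (y : Y),
      coarsen (p i) π y = ∑ z, (if z ∈ π y then p i z / (π y).card else 0) := by
    intro i y
    rw [coarsen, Finset.sum_div, Finset.sum_ite_mem, Finset.univ_inter]
  -- coarsening preserves total mass
  have htot : ∀ i, ∑ y, coarsen (p i) π y = ∑ y, p i y := by
    intro i
    simp_rw [hcoarse i]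
    rw [Finset.sum_comm]
    exact Finset.sum_congr rfl fun z _ => lemA (p i) π hπ z
  -- key pointwise bound
  have key : ∀ i, max ((∑ y ∈ S, p i y) - ∑ y ∈ S, coarsen (p i) π y) 0 ≤ ∑ y ∈ Sᶜ, q i y := by
    intro i
    apply max_le _ (Finset.sum_nonneg fun y _ => hq0 i y)
    have hsplitp := Finset.sum_add_sum_compl S (p i)
    have hsplitc := Finset.sum_add_sum_compl S (coarsen (p i) π)
    have hd : (∑ y ∈ S, p i y) - ∑ y ∈ S, coarsen (p i) π y
        = (∑ y ∈ Sᶜ, coarsen (p i) π y) - ∑ y ∈ Sᶜ, p i y := by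
      have := htot i
      linarith [hsplitp, hsplitc]
    rw [hd, sub_le_iff_le_add]
    -- split coarsen into S-part and Sᶜ-part
    have hsplit : ∀ y, coarsen (p i) π y
        = q i y + (∑ z ∈ π y \ S, p i z) / (π y).card := by
      intro y
      rw [coarsen, hqdef]
      rw [← Finset.sum_inter_add_sum_sdiff (π y) S (p i)]
      ring
    simp_rw [hsplit]
    rw [Finset.sum_add_distrib]
    have hrest : ∑ y ∈ Sᶜ, (∑ z ∈ π y \ S, p i z) / (π y).card ≤ ∑ y ∈ Sᶜ, p i y := by
      have hrw : ∀ y, (∑ z ∈ π y \ S, p i z) / (π y).card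
          = ∑ z ∈ Sᶜ, (if z ∈ π y then p i z / (π y).card else 0) := by
        intro y
        rw [Finset.sum_ite_mem, Finset.sum_div]
        apply Finset.sum_congr _ (fun _ _ => rfl)
        ext z
        simp [and_comm]
      simp_rw [hrw]
      rw [Finset.sum_comm]
      apply Finset.sum_le_sum
      intro z _
      calc ∑ y ∈ Sᶜ, (if z ∈ π y then p i z / (π y).card else 0)
          ≤ ∑ y, (if z ∈ π y then p i z / (π y).card else 0) := by
            apply Finset.sum_le_sum_of_subset_of_nonneg (Finset.subset_univ _)
            intro y _ _
            split
            · exact div_nonneg (hp i z) (by positivity)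
            · exact le_refl 0
        _ = p i z := lemA (p i) π hπ z
    linarith
  -- combine
  calc ∑ i, w i * max ((∑ y ∈ S, p i y) - ∑ y ∈ S, coarsen (p i) π y) 0
      ≤ ∑ i, w i * ∑ y ∈ Sᶜ, q i y := by
        apply Finset.sum_le_sum
        intro i _
        exact mul_le_mul_of_nonneg_left (key i) (hw i)
    _ = ∑ y ∈ Sᶜ, ∑ i, w i * q i y := by
        simp_rw [Finset.mul_sum]
        rw [Finset.sum_comm]
    _ ≤ ∑ y ∈ Sᶜ, M := by
        apply Finset.sum_le_sum
        intro y _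
        have hc : (0:ℝ) < (π y).card := by
          exact_mod_cast Finset.card_pos.2 ⟨y, hπ.1 y⟩
        have : ∑ i, w i * q i y = (∑ z ∈ π y ∩ S, ∑ i, w i * p i z) / (π y).card := by
          rw [hqdef]
          simp only []
          rw [Finset.sum_comm, Finset.sum_div]
          apply Finset.sum_congr rfl
          intro i _
          rw [mul_div_assoc', Finset.mul_sum]
        rw [this, div_le_iff₀ hc]
        calc ∑ z ∈ π y ∩ S, ∑ i, w i * p i z
            ≤ ∑ z ∈ π y ∩ S, M := by
              apply Finset.sum_le_sum
              intro z hz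
              exact hMy z (Finset.mem_inter.1 hz).2
          _ = ((π y ∩ S).card : ℝ) * M := by rw [Finset.sum_const, nsmul_eq_mul]
          _ ≤ ((π y).card : ℝ) * M := by
              apply mul_le_mul_of_nonneg_right _ hM0
              exact_mod_cast Finset.card_le_card Finset.inter_subset_left
          _ = M * (π y).card := by ring
    _ = ((Sᶜ : Finset Y).card : ℝ) * M := by rw [Finset.sum_const, nsmul_eq_mul]
end

section
/- Let Y be a finite set, ν a probability distribution over probability distributions p on Y, with a random subset F ⊆ Y (the facts, measurable with respect to p, satisfying supp(p) ⊆ F). Fix O ⊆ Y with O ⊆ F almost surely under ν, set U := Y \ O and H := Y \ F. Then for any fixed probability distribution g on Y and any fixed partition Π of Y: E_{p∼ν}[max(p(U) − ‖p^Π − g‖_TV − g(H), 0)] ≤ max_{y∈U} Pr_{p∼ν}[y ∈ F] + |O| · max_{y∈U} E_{p∼ν}[p(y)]. -/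
open Finset

/-!
Fix a sample `p` with facts `F ⊇ O` and put `U = Oᶜ`. Then `p(U) - ‖p^Π - g‖_TV - g(Fᶜ)` is the sum
of `p^Π(U) - g(U) - ‖p^Π - g‖_TV ≤ 0`, of `g(U) - g(Fᶜ) = g(U ∩ F)`, and of
`p(U) - p^Π(U) = p^Π(O) - p(O)`. Coarsening is self-adjoint, so `p^Π(O) = ∑_y p(y) c(y)` with
`c(y) = |π y ∩ O| / |π y| ≤ 1`, and the last term is at most `∑_{y ∈ U} p(y) c(y)`.
Averaging over the sample, the `g`-term is at most `max_{y ∈ U} Pr[y ∈ F]`, and the `p`-term at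
most `max_{y ∈ U} E[p(y)] · ∑_y c(y) = max_{y ∈ U} E[p(y)] · |O|`.
-/

section Coarsen

variable {Y : Type*} [Fintype Y] {π : Y → Finset Y}

theorem IsBlockFun.mem_comm (hπ : IsBlockFun π) {y z : Y} : z ∈ π y ↔ y ∈ π z :=
  ⟨fun h => hπ.2 y z h ▸ hπ.1 y, fun h => hπ.2 z y h ▸ hπ.1 z⟩

theorem IsBlockFun.card_pos (hπ : IsBlockFun π) (y : Y) : 0 < (π y).card :=
  Finset.card_pos.2 ⟨y, hπ.1 y⟩

theorem coarsen_nonneg {f : Y → ℝ} (hf : ∀ y, 0 ≤ f y) (y : Y) : 0 ≤ coarsen f π y :=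
  div_nonneg (sum_nonneg fun z _ => hf z) (Nat.cast_nonneg _)

theorem coarsen_le_one {f : Y → ℝ} (hf : ∀ y, f y ≤ 1) (y : Y) : coarsen f π y ≤ 1 :=
  div_le_one_of_le₀ (by simpa using sum_le_sum fun z (_ : z ∈ π y) => hf z) (Nat.cast_nonneg _)

theorem IsBlockFun.coarsen_one (hπ : IsBlockFun π) (y : Y) : coarsen (fun _ => 1) π y = 1 := by
  simp [coarsen, (hπ.card_pos y).ne']

theorem IsBlockFun.sum_coarsen_mul (hπ : IsBlockFun π) (f h : Y → ℝ) :
    ∑ y, coarsen f π y * h y = ∑ y, f y * coarsen h π y := by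
  classical
  have expand : ∀ f h : Y → ℝ, ∑ y, coarsen f π y * h y
      = ∑ y, ∑ z, if z ∈ π y then f z * h y / (π y).card else 0 := by
    intro f h
    refine sum_congr rfl fun y _ => ?_
    rw [coarsen, div_mul_eq_mul_div, sum_mul, sum_div, ← sum_filter, filter_mem_eq_inter,
      univ_inter]
  simp_rw [mul_comm (f _)]
  rw [expand, expand, sum_comm]
  refine sum_congr rfl fun z _ => sum_congr rfl fun y _ => ?_
  by_cases hzy : z ∈ π y
  · rw [if_pos hzy, if_pos (hπ.mem_comm.1 hzy), hπ.2 y z hzy, mul_comm (h y)]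
  · rw [if_neg hzy, if_neg fun h' => hzy (hπ.mem_comm.2 h')]

theorem IsBlockFun.sum_coarsen (hπ : IsBlockFun π) (f : Y → ℝ) :
    ∑ y, coarsen f π y = ∑ y, f y := by
  simpa [hπ.coarsen_one] using hπ.sum_coarsen_mul f fun _ => 1

theorem IsBlockFun.sum_coarsen_indicator [DecidableEq Y] (hπ : IsBlockFun π) (O : Finset Y) :
    ∑ y, coarsen (fun z => if z ∈ O then 1 else 0) π y = O.card := by
  rw [hπ.sum_coarsen, sum_boole, filter_mem_eq_inter, univ_inter]

theorem IsBlockFun.sum_compl_sub_sum_coarsen_le [DecidableEq Y] (hπ : IsBlockFun π) {p : Y → ℝ}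
    (hp : ∀ y, 0 ≤ p y) (O : Finset Y) :
    ∑ y ∈ Oᶜ, p y - ∑ y ∈ Oᶜ, coarsen p π y
      ≤ ∑ y ∈ Oᶜ, p y * coarsen (fun z => if z ∈ O then 1 else 0) π y := by
  set c := coarsen (fun z => if z ∈ O then 1 else 0) π
  have hO : ∑ y ∈ O, coarsen p π y = ∑ y, p y * c y := by
    rw [← hπ.sum_coarsen_mul]
    simp only [mul_ite, mul_one, mul_zero, sum_ite_mem, univ_inter]
  have hc : ∑ y ∈ O, p y * c y ≤ ∑ y ∈ O, p y :=
    sum_le_sum fun y _ =>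
      mul_le_of_le_one_right (hp y) (coarsen_le_one (fun z => by split_ifs <;> norm_num) y)
  linarith [hπ.sum_coarsen p, sum_add_sum_compl O p, sum_add_sum_compl O (coarsen p π),
    sum_add_sum_compl O fun y => p y * c y]

end Coarsen

theorem sum_sub_sum_le_half_sum_abs {ι : Type*} [Fintype ι] {f h : ι → ℝ}
    (hfh : ∑ i, f i = ∑ i, h i) (S : Finset ι) :
    ∑ i ∈ S, f i - ∑ i ∈ S, h i ≤ (1/2) * ∑ i, |f i - h i| := by
  classical
  have hS : ∑ i ∈ S, (f i - h i) ≤ ∑ i ∈ S, |f i - h i| := sum_le_sum fun _ _ => le_abs_self _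
  have hSc : ∑ i ∈ Sᶜ, (h i - f i) ≤ ∑ i ∈ Sᶜ, |f i - h i| :=
    sum_le_sum fun _ _ => abs_sub_comm (f _) _ ▸ le_abs_self _
  rw [sum_sub_distrib] at hS hSc
  linarith [sum_add_sum_compl S f, sum_add_sum_compl S h, sum_add_sum_compl S fun i => |f i - h i|]

theorem sum_compl_sub_sum_compl {Y : Type*} [Fintype Y] [DecidableEq Y] {O F : Finset Y}
    (hOF : O ⊆ F) (g : Y → ℝ) :
    ∑ y ∈ Oᶜ, g y - ∑ y ∈ Fᶜ, g y = ∑ y ∈ Oᶜ ∩ F, g y := by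
  rw [← sum_sdiff_eq_sub (compl_subset_compl.2 hOF)]
  congr 1
  ext; simp

theorem missing_mass_sub_le {Y : Type*} [Fintype Y] [DecidableEq Y] {π : Y → Finset Y}
    (hπ : IsBlockFun π) {p g : Y → ℝ} (hp : ∀ y, 0 ≤ p y) (hpg : ∑ y, p y = ∑ y, g y)
    {O F : Finset Y} (hOF : O ⊆ F) :
    ∑ y ∈ Oᶜ, p y - (1/2) * ∑ y, |coarsen p π y - g y| - ∑ y ∈ Fᶜ, g y
      ≤ ∑ y ∈ Oᶜ, p y * coarsen (fun z => if z ∈ O then 1 else 0) π y + ∑ y ∈ Oᶜ ∩ F, g y := by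
  linarith [hπ.sum_compl_sub_sum_coarsen_le hp O, sum_compl_sub_sum_compl hOF g,
    sum_sub_sum_le_half_sum_abs ((hπ.sum_coarsen p).trans hpg) Oᶜ]

theorem sum_mul_sum_le_sup'_mul {ι α : Type*} [Fintype ι] {U : Finset α} (hU : U.Nonempty)
    {w : ι → ℝ} {a : ι → α → ℝ} {b : α → ℝ} {C : ℝ} (hw : ∀ i, 0 ≤ w i)
    (ha : ∀ i y, 0 ≤ a i y) (hb : ∀ y ∈ U, 0 ≤ b y) (hbC : ∑ y ∈ U, b y ≤ C) :
    ∑ i, w i * ∑ y ∈ U, a i y * b y ≤ U.sup' hU (fun y => ∑ i, w i * a i y) * C := by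
  set M := U.sup' hU (fun y => ∑ i, w i * a i y)
  have hM : 0 ≤ M := le_sup'_of_le _ hU.choose_spec
    (sum_nonneg fun i _ => mul_nonneg (hw i) (ha i _))
  calc ∑ i, w i * ∑ y ∈ U, a i y * b y = ∑ y ∈ U, (∑ i, w i * a i y) * b y := by
        simp only [mul_sum, sum_mul, mul_assoc]
        exact sum_comm
    _ ≤ ∑ y ∈ U, M * b y := sum_le_sum fun y hy =>
        mul_le_mul_of_nonneg_right (le_sup' (fun y => ∑ i, w i * a i y) hy) (hb y hy)
    _ ≤ M * C := by rw [← mul_sum]; exact mul_le_mul_of_nonneg_left hbC hM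

theorem stmt4_general {ι Y : Type*} [Fintype ι] [Fintype Y] [DecidableEq Y]
    (w : ι → ℝ) (hw : ∀ i, 0 ≤ w i)
    (p : ι → Y → ℝ) (hp : ∀ i y, 0 ≤ p i y) (hp1 : ∀ i, ∑ y, p i y = 1)
    (F : ι → Finset Y)
    (O : Finset Y) (hO : ∀ i, w i ≠ 0 → O ⊆ F i) (hU : (Oᶜ : Finset Y).Nonempty)
    (g : Y → ℝ) (hg : ∀ y, 0 ≤ g y) (hg1 : ∑ y, g y = 1)
    (π : Y → Finset Y) (hπ : IsBlockFun π) :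
    ∑ i, w i * max ((∑ y ∈ (Oᶜ : Finset Y), p i y)
        - (1/2) * (∑ y, |coarsen (p i) π y - g y|)
        - ∑ y ∈ ((F i)ᶜ : Finset Y), g y) 0 ≤
      (Oᶜ : Finset Y).sup' hU (fun y => ∑ i ∈ Finset.univ.filter (fun i => y ∈ F i), w i)
        + (O.card : ℝ) * (Oᶜ : Finset Y).sup' hU (fun y => ∑ i, w i * p i y) := by
  set c := coarsen (fun z => if z ∈ O then 1 else 0) π
  have hc : ∀ y, 0 ≤ c y := coarsen_nonneg fun z => by split_ifs <;> norm_num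
  have hF : ∀ i y, 0 ≤ if y ∈ F i then (1 : ℝ) else 0 := fun i y => by split_ifs <;> norm_num
  have hsample : ∀ i, w i * max (∑ y ∈ Oᶜ, p i y - (1/2) * ∑ y, |coarsen (p i) π y - g y|
        - ∑ y ∈ (F i)ᶜ, g y) 0
      ≤ w i * (∑ y ∈ Oᶜ, (if y ∈ F i then 1 else 0) * g y) + w i * ∑ y ∈ Oᶜ, p i y * c y := by
    intro i
    rw [← mul_add]
    rcases eq_or_ne (w i) 0 with hwi | hwi
    · simp [hwi]
    refine mul_le_mul_of_nonneg_left (max_le ?_ ?_) (hw i)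
    · simpa [ite_mul, sum_ite_mem, add_comm] using
        missing_mass_sub_le hπ (hp i) ((hp1 i).trans hg1.symm) (hO i hwi)
    · exact add_nonneg (sum_nonneg fun y _ => mul_nonneg (hF i y) (hg y))
        (sum_nonneg fun y _ => mul_nonneg (hp i y) (hc y))
  have hfactBound := sum_mul_sum_le_sup'_mul hU hw hF (fun y _ => hg y)
    ((sum_le_sum_of_subset_of_nonneg (subset_univ _) fun y _ _ => hg y).trans hg1.le)
  have hmassBound := sum_mul_sum_le_sup'_mul hU hw hp (fun y _ => hc y)
    ((sum_le_sum_of_subset_of_nonneg (subset_univ _) fun y _ _ => hc y).trans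
      (hπ.sum_coarsen_indicator O).le)
  simp only [mul_ite, mul_one, mul_zero, ← sum_filter] at hfactBound
  calc _ ≤ _ := sum_le_sum fun i _ => hsample i
    _ ≤ _ := by rw [sum_add_distrib]; linarith

theorem stmt4 {ι Y : Type*} [Fintype ι] [Fintype Y] [DecidableEq Y]
    (w : ι → ℝ) (hw : ∀ i, 0 ≤ w i) (hw1 : ∑ i, w i = 1)
    (p : ι → Y → ℝ) (hp : ∀ i y, 0 ≤ p i y) (hp1 : ∀ i, ∑ y, p i y = 1)
    (F : ι → Finset Y) (hsupp : ∀ i, w i ≠ 0 → ∀ y, p i y ≠ 0 → y ∈ F i)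
    (O : Finset Y) (hO : ∀ i, w i ≠ 0 → O ⊆ F i) (hU : (Oᶜ : Finset Y).Nonempty)
    (g : Y → ℝ) (hg : ∀ y, 0 ≤ g y) (hg1 : ∑ y, g y = 1)
    (π : Y → Finset Y) (hπ : IsBlockFun π) :
    ∑ i, w i * max ((∑ y ∈ (Oᶜ : Finset Y), p i y)
        - (1/2) * (∑ y, |coarsen (p i) π y - g y|)
        - ∑ y ∈ ((F i)ᶜ : Finset Y), g y) 0 ≤
      (Oᶜ : Finset Y).sup' hU (fun y => ∑ i ∈ Finset.univ.filter (fun i => y ∈ F i), w i)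
        + (O.card : ℝ) * (Oᶜ : Finset Y).sup' hU (fun y => ∑ i, w i * p i y) :=
  stmt4_general w hw p hp hp1 F O hO hU g hg hg1 π hπ
end

section
/- Let Y be a finite set, O ⊆ Y nonempty with nonempty complement U = Y \ O, MF ∈ [0,1], and define g(y) = MF/|U| on U and g(y) = (1−MF)/|O| on O. Let p be any probability distribution on Y. Then the miscalibration ‖p^{B(g)} − g‖_TV, where B(g) is the partition of Y into level sets of g, satisfies ‖p^{B(g)} − g‖_TV ≤ |p(U) − MF|. -/
open Finset

open scoped Classical in
theorem stmt8 {Y : Type*} [Fintype Y] [DecidableEq Y]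
    (O : Finset Y) (hO : O.Nonempty) (hU : (Oᶜ : Finset Y).Nonempty)
    (MF : ℝ) (hMF0 : 0 ≤ MF) (hMF1 : MF ≤ 1)
    (p : Y → ℝ) (hp : ∀ y, 0 ≤ p y) (hp1 : ∑ y, p y = 1)
    (g : Y → ℝ)
    (hgdef : g = fun y => if y ∈ O then (1 - MF) / O.card else MF / (Oᶜ : Finset Y).card) :
    (1/2) * ∑ y, |coarsen p (fun y => Finset.univ.filter (fun z => g z = g y)) y - g y| ≤
      |(∑ y ∈ (Oᶜ : Finset Y), p y) - MF| := by
  have ho0 : (0:ℝ) < (O.card : ℝ) := by exact_mod_cast Finset.card_pos.mpr hO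
  have hu0 : (0:ℝ) < ((Oᶜ : Finset Y).card : ℝ) := by exact_mod_cast Finset.card_pos.mpr hU
  have hgval : ∀ y : Y, g y = if y ∈ O then (1 - MF) / O.card else MF / (Oᶜ : Finset Y).card := by
    intro y; rw [hgdef]
  have hsplit : ∀ f : Y → ℝ, ∑ y, f y = ∑ y ∈ O, f y + ∑ y ∈ (Oᶜ : Finset Y), f y := by
    intro f; rw [Finset.sum_add_sum_compl]
  have hpO : ∑ y ∈ O, p y = 1 - ∑ y ∈ (Oᶜ : Finset Y), p y := by
    have := hsplit p; rw [hp1] at this; linarith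
  by_cases hab : MF / ((Oᶜ : Finset Y).card : ℝ) = (1 - MF) / (O.card : ℝ)
  · -- g is constant
    have hconst : ∀ y : Y, g y = MF / ((Oᶜ : Finset Y).card : ℝ) := by
      intro y; rw [hgval y]; split <;> simp [hab]
    have hfilt : ∀ y : Y, (Finset.univ.filter (fun z => g z = g y)) = (Finset.univ : Finset Y) := by
      intro y; apply Finset.filter_true_of_mem; intro z _; rw [hconst, hconst]
    have hcardY : (Fintype.card Y : ℝ) = (O.card : ℝ) + ((Oᶜ : Finset Y).card : ℝ) := by
      have := Finset.card_add_card_compl O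
      push_cast [← this]; ring
    have hsumg : ∑ y, g y = 1 := by
      rw [hsplit g]
      have h1 : ∑ y ∈ O, g y = 1 - MF := by
        rw [Finset.sum_congr rfl (fun y hy => by rw [hgval y, if_pos hy]),
          Finset.sum_const, nsmul_eq_mul]
        field_simp
      have h2 : ∑ y ∈ (Oᶜ : Finset Y), g y = MF := by
        rw [Finset.sum_congr rfl (fun y hy => by
          rw [hgval y, if_neg (Finset.mem_compl.mp hy)]), Finset.sum_const, nsmul_eq_mul]
        field_simp
      rw [h1, h2]; ring
    have hsumg2 : ∑ y, g y = (Fintype.card Y : ℝ) * (MF / ((Oᶜ : Finset Y).card : ℝ)) := by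
      rw [Finset.sum_congr rfl (fun y _ => hconst y), Finset.sum_const, nsmul_eq_mul,
        Finset.card_univ]
    have hcY0 : (0:ℝ) < (Fintype.card Y : ℝ) := by rw [hcardY]; linarith
    have hval : MF / ((Oᶜ : Finset Y).card : ℝ) = 1 / (Fintype.card Y : ℝ) := by
      rw [hsumg] at hsumg2
      rw [eq_div_iff (ne_of_gt hcY0), mul_comm]
      exact hsumg2.symm
    have hzero : ∀ y : Y,
        |coarsen p (fun y => Finset.univ.filter (fun z => g z = g y)) y - g y| = 0 := by
      intro y
      rw [abs_eq_zero, sub_eq_zero]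
      unfold coarsen
      simp only [hfilt y]
      rw [Finset.card_univ, hp1, hconst y, hval]
    rw [Finset.sum_congr rfl (fun y _ => hzero y), Finset.sum_const]
    simp [abs_nonneg]
  · -- two level sets
    have hfO : ∀ y ∈ O, (Finset.univ.filter (fun z => g z = g y)) = O := by
      intro y hy
      ext z
      simp only [Finset.mem_filter, Finset.mem_univ, true_and]
      rw [hgval z, hgval y, if_pos hy]
      by_cases hz : z ∈ O
      · simp [hz]
      · simp only [if_neg hz]
        constructor
        · intro h; exact absurd h hab
        · intro h; exact absurd h hz
    have hfU : ∀ y ∈ (Oᶜ : Finset Y), (Finset.univ.filter (fun z => g z = g y)) = (Oᶜ : Finset Y) := by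
      intro y hy
      have hy' : y ∉ O := Finset.mem_compl.mp hy
      ext z
      simp only [Finset.mem_filter, Finset.mem_univ, true_and, Finset.mem_compl]
      rw [hgval z, hgval y, if_neg hy']
      by_cases hz : z ∈ O
      · simp only [if_pos hz]
        constructor
        · intro h; exact absurd h.symm hab
        · intro h; exact absurd hz h
      · simp [hz]
    have hsO : ∑ y ∈ O, |coarsen p (fun y => Finset.univ.filter (fun z => g z = g y)) y - g y|
        = |(∑ y ∈ O, p y) - (1 - MF)| := by
      rw [Finset.sum_congr rfl (fun y hy => by
        unfold coarsen
        simp only [hfO y hy]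
        rw [hgval y, if_pos hy, div_sub_div_same, abs_div, abs_of_pos ho0])]
      rw [Finset.sum_const, nsmul_eq_mul]
      field_simp
    have hsU : ∑ y ∈ (Oᶜ : Finset Y),
        |coarsen p (fun y => Finset.univ.filter (fun z => g z = g y)) y - g y|
        = |(∑ y ∈ (Oᶜ : Finset Y), p y) - MF| := by
      rw [Finset.sum_congr rfl (fun y hy => by
        unfold coarsen
        simp only [hfU y hy]
        rw [hgval y, if_neg (Finset.mem_compl.mp hy), div_sub_div_same, abs_div,
          abs_of_pos hu0])]
      rw [Finset.sum_const, nsmul_eq_mul]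
      field_simp
    rw [hsplit, hsO, hsU, hpO]
    have : |1 - ∑ y ∈ (Oᶜ : Finset Y), p y - (1 - MF)| = |(∑ y ∈ (Oᶜ : Finset Y), p y) - MF| := by
      rw [abs_sub_comm]; ring_nf
    rw [this]; linarith [abs_nonneg ((∑ y ∈ (Oᶜ : Finset Y), p y) - MF)]
end

section
/- Let Y be a finite set and p, g probability distributions on Y. Then g is a coarsening of p (i.e., g = p^Π for some partition Π of Y) if and only if g = p^{B(g)}, where B(g) is the partition of Y into level sets of g. -/
open Finset

open scoped Classical in
theorem stmt10 {Y : Type*} [Fintype Y]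
    (p g : Y → ℝ) (hp : ∀ y, 0 ≤ p y) (hp1 : ∑ y, p y = 1)
    (hg : ∀ y, 0 ≤ g y) (hg1 : ∑ y, g y = 1) :
    (∃ π : Y → Finset Y, IsBlockFun π ∧ g = coarsen p π) ↔
      g = coarsen p (fun y => Finset.univ.filter (fun z => g z = g y)) := by
  constructor
  · rintro ⟨π, ⟨hmem, hblk⟩, rfl⟩
    set G := coarsen p π with hG
    have hGdef : ∀ z, G z = ∑ w ∈ Finset.univ, (if w ∈ π z then p w / (π z).card else 0) := by
      intro z
      rw [Finset.sum_ite_mem, Finset.univ_inter, ← Finset.sum_div]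
      rfl
    funext y
    set L := Finset.univ.filter (fun z => G z = G y) with hLdef
    have hyL : y ∈ L := by simp [hLdef]
    have hsub : ∀ w, w ∈ L → π w ⊆ L := by
      intro w hw z hz
      have hw' : G w = G y := (Finset.mem_filter.mp hw).2
      have e : π z = π w := hblk w z hz
      have : G z = G w := by
        show coarsen p π z = coarsen p π w
        unfold coarsen; rw [e]
      simp only [hLdef, Finset.mem_filter]
      exact ⟨Finset.mem_univ z, this.trans hw'⟩
    have key : ∑ z ∈ L, G z = ∑ z ∈ L, p z := by
      calc ∑ z ∈ L, G z
          = ∑ z ∈ L, ∑ w ∈ Finset.univ, (if w ∈ π z then p w / (π z).card else 0) :=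
            Finset.sum_congr rfl (fun z _ => hGdef z)
        _ = ∑ w ∈ Finset.univ, ∑ z ∈ L, (if w ∈ π z then p w / (π z).card else 0) :=
            Finset.sum_comm
        _ = ∑ w ∈ Finset.univ, ∑ z ∈ L, (if z ∈ π w then p w / (π w).card else 0) := by
            refine Finset.sum_congr rfl (fun w _ => Finset.sum_congr rfl (fun z _ => ?_))
            by_cases h : w ∈ π z
            · have e : π w = π z := hblk z w h
              rw [if_pos h, if_pos (by rw [e]; exact hmem z), e]
            · rw [if_neg h, if_neg]
              intro hz
              exact h (by rw [hblk w z hz]; exact hmem w)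
        _ = ∑ w ∈ Finset.univ, ∑ z ∈ L ∩ π w, p w / (π w).card := by
            refine Finset.sum_congr rfl (fun w _ => ?_)
            rw [Finset.sum_ite_mem]
        _ = ∑ w ∈ Finset.univ, (if w ∈ L then p w else 0) := by
            refine Finset.sum_congr rfl (fun w _ => ?_)
            by_cases hw : w ∈ L
            · have hinter : L ∩ π w = π w :=
                Finset.inter_eq_right.mpr (hsub w hw)
              rw [if_pos hw, hinter, Finset.sum_const, nsmul_eq_mul]
              have hcard : ((π w).card : ℝ) ≠ 0 := by
                have : 0 < (π w).card := Finset.card_pos.mpr ⟨w, hmem w⟩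
                exact_mod_cast this.ne'
              field_simp
            · have hinter : L ∩ π w = ∅ := by
                apply Finset.eq_empty_of_forall_notMem
                intro z hz
                rcases Finset.mem_inter.mp hz with ⟨hzL, hzπ⟩
                exact hw (hsub z hzL (by rw [hblk w z hzπ]; exact hmem w))
              rw [if_neg hw, hinter, Finset.sum_empty]
        _ = ∑ z ∈ L, p z := by rw [Finset.sum_ite_mem, Finset.univ_inter]
    have hsumG : ∑ z ∈ L, G z = L.card * G y := by
      rw [Finset.sum_congr rfl (fun z hz => (Finset.mem_filter.mp hz).2),
        Finset.sum_const, nsmul_eq_mul]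
    have hLcard : (L.card : ℝ) ≠ 0 := by
      have : 0 < L.card := Finset.card_pos.mpr ⟨y, hyL⟩
      exact_mod_cast this.ne'
    show G y = coarsen p (fun y => Finset.univ.filter (fun z => G z = G y)) y
    unfold coarsen
    simp only
    rw [← hLdef, ← key, hsumG, mul_div_cancel_left₀ _ hLcard]
  · intro h
    refine ⟨fun y => Finset.univ.filter (fun z => g z = g y), ⟨?_, ?_⟩, h⟩
    · intro y; simp
    · intro y z hz
      have hgz : g z = g y := (Finset.mem_filter.mp hz).2
      ext w
      simp [Finset.mem_filter, hgz]
end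

section
/- Let D be a probability distribution on a countable set S and n ≥ 1. For a sample s = (s_1,…,s_n) drawn i.i.d. from D, let M(s) := D(S \ {s_1,…,s_n}) be the missing mass and GT(s) := (1/n)·|{i : s_i ≠ s_j for all j ≠ i}| the Good–Turing estimator. Then E[M(s)] ≤ E[GT(s)] ≤ E[M(s)] + 1/n. -/
open Finset
open scoped Classical

/-- Expectation of `f` over `n` i.i.d. samples from `D`. -/
noncomputable def sampExp {S : Type*} [Countable S] (D : S → ℝ) (n : ℕ)
    (f : (Fin n → S) → ℝ) : ℝ :=
  ∑' s : Fin n → S, (∏ i, D (s i)) * f s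

/-- The missing mass of a sample: total `D`-probability of unseen elements. -/
noncomputable def missingMass {S : Type*} [Countable S] (D : S → ℝ) {n : ℕ}
    (s : Fin n → S) : ℝ :=
  ∑' x : S, if ∀ i, s i ≠ x then D x else 0

/-- The Good–Turing estimator: fraction of sample points appearing exactly once. -/
noncomputable def goodTuring {S : Type*} {n : ℕ} (s : Fin n → S) : ℝ :=
  ((Finset.univ.filter (fun i : Fin n => ∀ j, j ≠ i → s j ≠ s i)).card : ℝ) / n

/-!
Passing to `ℝ≥0∞`, where all sums converge and may be exchanged, the point `x` is missed by the
sample with probability `(1 - D x)ⁿ`, so `E[M] = ∑ₓ D x (1 - D x)ⁿ`; splitting off the coordinate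
`i`, the sample point `sᵢ` is a singleton with probability `∑ₓ D x (1 - D x)ⁿ⁻¹`, which is
therefore `E[GT]`. Their difference is `∑ₓ D x · D x (1 - D x)ⁿ⁻¹`, and `n D x (1 - D x)ⁿ⁻¹ ≤ 1`
because it is one term of the binomial expansion of `(D x + (1 - D x))ⁿ = 1`.
-/

theorem Summable.of_tsum_ne_zero {α β : Type*} [AddCommMonoid α] [TopologicalSpace α]
    {f : β → α} (h : ∑' b, f b ≠ 0) : Summable f :=
  not_not.mp fun hf => h (tsum_eq_zero_of_not_summable hf)

open scoped ENNReal

namespace ENNReal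

variable {S : Type*}

theorem tsum_fin_pi_prod (g : S → ℝ≥0∞) (m : ℕ) :
    ∑' t : Fin m → S, ∏ j, g (t j) = (∑' y, g y) ^ m := by
  induction m with
  | zero => simp
  | succ m ih =>
    rw [← (Fin.consEquiv fun _ => S).tsum_eq, ENNReal.tsum_prod', pow_succ', ← ih,
      ← ENNReal.tsum_mul_right]
    simp [Fin.prod_univ_succ, ENNReal.tsum_mul_left]

theorem tsum_pi_prod (ι : Type*) [Fintype ι] (g : S → ℝ≥0∞) :
    ∑' t : ι → S, ∏ j, g (t j) = (∑' y, g y) ^ Fintype.card ι := by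
  let e := (Fintype.equivFin ι).arrowCongr (Equiv.refl S)
  rw [← tsum_fin_pi_prod, ← e.symm.tsum_eq]
  congr! 2 with t
  exact ((Fintype.equivFin ι).prod_comp fun k => g (t k))

theorem tsum_pi_ite_forall_ne_prod (ι : Type*) [Fintype ι] {g : S → ℝ≥0∞} {x : S}
    (hx : g x ≠ ∞) :
    ∑' t : ι → S, (if ∀ j, t j ≠ x then ∏ j, g (t j) else 0) =
      (∑' y, g y - g x) ^ Fintype.card ι := by
  have hcompl : ∑' y, g y - g x = ∑' y, if y = x then 0 else g y :=
    ENNReal.sub_eq_of_eq_add_rev hx (ENNReal.tsum_eq_add_tsum_ite x)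
  rw [hcompl, ← tsum_pi_prod]
  refine tsum_congr fun t => ?_
  split_ifs with h
  · exact prod_congr rfl fun j _ => (if_neg (h j)).symm
  · obtain ⟨j, hj⟩ := not_forall_not.mp h
    exact (prod_eq_zero (mem_univ j) (by simp [hj])).symm

theorem tsum_pi_ite_forall_ne_apply {ι : Type*} [Fintype ι] [DecidableEq ι] (i : ι)
    {g : S → ℝ≥0∞} (hg : ∀ x, g x ≠ ∞) :
    ∑' s : ι → S, (if ∀ j, j ≠ i → s j ≠ s i then ∏ j, g (s j) else 0) =
      ∑' x, g x * (∑' y, g y - g x) ^ (Fintype.card ι - 1) := by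
  let e := Equiv.funSplitAt i S
  have hsplit (s : ι → S) : (if ∀ j, j ≠ i → s j ≠ s i then ∏ j, g (s j) else 0) =
      g (e s).1 * if ∀ j, (e s).2 j ≠ (e s).1 then ∏ j, g ((e s).2 j) else 0 := by
    change _ = g (s i) * if ∀ j : {j // j ≠ i}, s j ≠ s i then ∏ j : {j // j ≠ i}, g (s j) else 0
    rw [Fintype.prod_eq_mul_prod_subtype_ne _ i]
    simp only [Subtype.forall, mul_ite, mul_zero]
  rw [tsum_congr hsplit,
    e.tsum_eq fun p => g p.1 * if ∀ j, p.2 j ≠ p.1 then ∏ j, g (p.2 j) else 0,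
    ENNReal.tsum_prod']
  simp_rw [ENNReal.tsum_mul_left, tsum_pi_ite_forall_ne_prod _ (hg _),
    Fintype.card_subtype_compl, Fintype.card_unique]

theorem natCast_mul_mul_pow_pred_le_one {a b : ℝ≥0∞} (hab : a + b = 1) (n : ℕ) :
    n * (a * b ^ (n - 1)) ≤ 1 := by
  rcases n with _ | n
  · simp
  calc ((n + 1 : ℕ) : ℝ≥0∞) * (a * b ^ (n + 1 - 1))
      = a ^ 1 * b ^ (n + 1 - 1) * (n + 1).choose 1 := by simp [mul_comm]
    _ ≤ ∑ k ∈ range (n + 2), a ^ k * b ^ (n + 1 - k) * (n + 1).choose k :=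
      single_le_sum (f := fun k => a ^ k * b ^ (n + 1 - k) * (n + 1).choose k)
        (fun _ _ => zero_le) (mem_range.mpr (by omega))
    _ = 1 := by rw [← add_pow, hab, one_pow]

theorem mul_pow_pred_le_mul_pow_add {a b : ℝ≥0∞} (hab : a + b = 1) {n : ℕ} (hn : n ≠ 0) :
    a * b ^ (n - 1) ≤ a * b ^ n + a * (n : ℝ≥0∞)⁻¹ := by
  obtain ⟨m, rfl⟩ := Nat.exists_eq_add_one_of_ne_zero hn
  have hsplit : a * b ^ m = a * b ^ (m + 1) + a * (a * b ^ m) := by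
    conv_lhs => rw [← one_mul (b ^ m), ← hab]
    ring
  have hterm : a * b ^ m ≤ ((m + 1 : ℕ) : ℝ≥0∞)⁻¹ := by
    rw [le_inv_iff_mul_le, mul_comm]
    simpa using natCast_mul_mul_pow_pred_le_one hab (m + 1)
  rw [Nat.add_sub_cancel, hsplit]
  gcongr

theorem tsum_mul_pow_antitone (d : S → ℝ≥0∞) {c : S → ℝ≥0∞} (hc : ∀ x, c x ≤ 1) :
    Antitone fun k => ∑' x, d x * c x ^ k :=
  fun _ _ hkm => ENNReal.tsum_le_tsum fun x =>
    mul_le_mul' le_rfl (pow_le_pow_of_le_one zero_le (hc x) hkm)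

theorem tsum_mul_one_sub_pow_pred_le {d : S → ℝ≥0∞} (hd : ∑' x, d x = 1) {n : ℕ} (hn : n ≠ 0) :
    ∑' x, d x * (1 - d x) ^ (n - 1) ≤ ∑' x, d x * (1 - d x) ^ n + (n : ℝ≥0∞)⁻¹ :=
  calc ∑' x, d x * (1 - d x) ^ (n - 1)
      ≤ ∑' x, (d x * (1 - d x) ^ n + d x * (n : ℝ≥0∞)⁻¹) := by
        refine ENNReal.tsum_le_tsum fun x => mul_pow_pred_le_mul_pow_add ?_ hn
        exact add_tsub_cancel_of_le (hd ▸ ENNReal.le_tsum x)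
    _ = ∑' x, d x * (1 - d x) ^ n + (n : ℝ≥0∞)⁻¹ := by
        rw [ENNReal.tsum_add, ENNReal.tsum_mul_right, hd, one_mul]

theorem tsum_mul_one_sub_pow_ne_top {d : S → ℝ≥0∞} (hd : ∑' x, d x = 1) (k : ℕ) :
    ∑' x, d x * (1 - d x) ^ k ≠ ∞ :=
  ne_top_of_le_ne_top (by simp [hd])
    (tsum_mul_pow_antitone d (fun _ => tsub_le_self) (Nat.zero_le k))

theorem toReal_tsum_mul_one_sub_pow_le_pred {d : S → ℝ≥0∞} (hd : ∑' x, d x = 1) (n : ℕ) :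
    (∑' x, d x * (1 - d x) ^ n).toReal ≤ (∑' x, d x * (1 - d x) ^ (n - 1)).toReal :=
  toReal_mono (tsum_mul_one_sub_pow_ne_top hd _)
    (tsum_mul_pow_antitone d (fun _ => tsub_le_self) (Nat.sub_le n 1))

theorem toReal_tsum_mul_one_sub_pow_pred_le {d : S → ℝ≥0∞} (hd : ∑' x, d x = 1) {n : ℕ}
    (hn : n ≠ 0) :
    (∑' x, d x * (1 - d x) ^ (n - 1)).toReal ≤ (∑' x, d x * (1 - d x) ^ n).toReal + 1 / n := by
  have hinv : (n : ℝ≥0∞)⁻¹ ≠ ∞ := by simp [hn]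
  calc (∑' x, d x * (1 - d x) ^ (n - 1)).toReal
      ≤ (∑' x, d x * (1 - d x) ^ n + (n : ℝ≥0∞)⁻¹).toReal :=
        toReal_mono (add_ne_top.mpr ⟨tsum_mul_one_sub_pow_ne_top hd n, hinv⟩)
          (tsum_mul_one_sub_pow_pred_le hd hn)
    _ = (∑' x, d x * (1 - d x) ^ n).toReal + 1 / n := by
        rw [toReal_add (tsum_mul_one_sub_pow_ne_top hd n) hinv, toReal_inv, toReal_natCast,
          one_div]

end ENNReal

section Sampling

variable {S : Type*}

noncomputable def sampLExp (d : S → ℝ≥0∞) (n : ℕ) (f : (Fin n → S) → ℝ≥0∞) : ℝ≥0∞ :=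
  ∑' s : Fin n → S, (∏ i, d (s i)) * f s

theorem sampLExp_div_const (d : S → ℝ≥0∞) {n : ℕ} (f : (Fin n → S) → ℝ≥0∞) (c : ℝ≥0∞) :
    sampLExp d n (fun s => f s / c) = sampLExp d n f / c := by
  simp only [sampLExp, div_eq_mul_inv, ← mul_assoc, ENNReal.tsum_mul_right]

theorem sampLExp_tsum_ite_forall_ne {d : S → ℝ≥0∞} (hd : ∀ x, d x ≠ ∞) (n : ℕ) :
    sampLExp d n (fun s => ∑' x, if ∀ i, s i ≠ x then d x else 0) =
      ∑' x, d x * (∑' y, d y - d x) ^ n := by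
  simp_rw [sampLExp, ← ENNReal.tsum_mul_left]
  rw [ENNReal.tsum_comm]
  refine tsum_congr fun x => ?_
  have h := ENNReal.tsum_pi_ite_forall_ne_prod (Fin n) (hd x)
  rw [Fintype.card_fin] at h
  rw [← h, ← ENNReal.tsum_mul_left]
  refine tsum_congr fun s => ?_
  split_ifs <;> simp [mul_comm]

theorem sampLExp_card_filter_forall_ne {d : S → ℝ≥0∞} (hd : ∀ x, d x ≠ ∞) (n : ℕ) :
    sampLExp d n (fun s => #{i | ∀ j, j ≠ i → s j ≠ s i}) =
      n * ∑' x, d x * (∑' y, d y - d x) ^ (n - 1) := by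
  simp_rw [sampLExp, card_filter, Nat.cast_sum, mul_sum]
  rw [Summable.tsum_finsetSum fun _ _ => ENNReal.summable]
  simp only [Nat.cast_ite, Nat.cast_one, Nat.cast_zero, mul_ite, mul_one, mul_zero]
  -- `convert` reconciles the decidability instance of `∀ j : Fin n` with the general one
  calc _ = ∑ _i : Fin n, ∑' x, d x * (∑' y, d y - d x) ^ (n - 1) := sum_congr rfl fun i _ => by
        convert ENNReal.tsum_pi_ite_forall_ne_apply i hd using 4; simp
    _ = _ := by simp

theorem goodTuring_nonneg {n : ℕ} (s : Fin n → S) : 0 ≤ goodTuring s := by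
  unfold goodTuring; positivity

theorem ofReal_goodTuring {n : ℕ} (hn : 0 < n) (s : Fin n → S) :
    ENNReal.ofReal (goodTuring s) = #{i | ∀ j, j ≠ i → s j ≠ s i} / n := by
  rw [goodTuring, ENNReal.ofReal_div_of_pos (by exact_mod_cast hn), ENNReal.ofReal_natCast,
    ENNReal.ofReal_natCast]

variable [Countable S]

theorem sampExp_eq_toReal_sampLExp {D : S → ℝ} (hD : ∀ x, 0 ≤ D x) {n : ℕ}
    {f : (Fin n → S) → ℝ} (hf : ∀ s, 0 ≤ f s) :
    sampExp D n f =
      (sampLExp (fun x => ENNReal.ofReal (D x)) n fun s => ENNReal.ofReal (f s)).toReal := by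
  rw [sampLExp, ENNReal.tsum_toReal_eq fun s =>
    ENNReal.mul_ne_top (ENNReal.prod_ne_top fun _ _ => ENNReal.ofReal_ne_top) ENNReal.ofReal_ne_top]
  refine tsum_congr fun s => ?_
  simp [ENNReal.toReal_prod, hD, hf]

theorem missingMass_nonneg {D : S → ℝ} (hD : ∀ x, 0 ≤ D x) {n : ℕ} (s : Fin n → S) :
    0 ≤ missingMass D s :=
  tsum_nonneg fun x => by split_ifs <;> simp [hD x]

theorem ofReal_missingMass {D : S → ℝ} (hD : ∀ x, 0 ≤ D x) (hsum : Summable D) {n : ℕ}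
    (s : Fin n → S) :
    ENNReal.ofReal (missingMass D s) =
      ∑' x, if ∀ i, s i ≠ x then ENNReal.ofReal (D x) else 0 := by
  have hle (x : S) : 0 ≤ (if ∀ i, s i ≠ x then D x else 0) ∧
      (if ∀ i, s i ≠ x then D x else 0) ≤ D x := by
    split_ifs <;> simp [hD x]
  rw [missingMass, ENNReal.ofReal_tsum_of_nonneg (fun x => (hle x).1)
    (hsum.of_nonneg_of_le (fun x => (hle x).1) fun x => (hle x).2)]
  exact tsum_congr fun x => by split_ifs <;> simp

theorem sampExp_missingMass {D : S → ℝ} (hD : ∀ x, 0 ≤ D x) (hsum : Summable D) (n : ℕ) :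
    sampExp D n (missingMass D) =
      (∑' x, ENNReal.ofReal (D x) *
        (∑' y, ENNReal.ofReal (D y) - ENNReal.ofReal (D x)) ^ n).toReal := by
  rw [sampExp_eq_toReal_sampLExp hD (missingMass_nonneg hD)]
  simp_rw [ofReal_missingMass hD hsum]
  rw [sampLExp_tsum_ite_forall_ne fun _ => ENNReal.ofReal_ne_top]

theorem sampExp_goodTuring {D : S → ℝ} (hD : ∀ x, 0 ≤ D x) {n : ℕ} (hn : 0 < n) :
    sampExp D n (fun s => goodTuring s) =
      (∑' x, ENNReal.ofReal (D x) *
        (∑' y, ENNReal.ofReal (D y) - ENNReal.ofReal (D x)) ^ (n - 1)).toReal := by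
  rw [sampExp_eq_toReal_sampLExp hD goodTuring_nonneg]
  simp_rw [ofReal_goodTuring hn]
  rw [sampLExp_div_const, sampLExp_card_filter_forall_ne fun _ => ENNReal.ofReal_ne_top,
    mul_comm (n : ℝ≥0∞), ENNReal.mul_div_cancel_right (by positivity) (ENNReal.natCast_ne_top n)]

end Sampling

theorem stmt15_general {S : Type*} [Countable S] (D : S → ℝ)
    (hD : ∀ x, 0 ≤ D x) (h1 : ∑' x, D x = 1)
    (n : ℕ) (hn : 1 ≤ n) :
    sampExp D n (missingMass D) ≤ sampExp D n (fun s => goodTuring s) ∧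
    sampExp D n (fun s => goodTuring s) ≤ sampExp D n (missingMass D) + 1 / n := by
  have hsum : Summable D := .of_tsum_ne_zero (h1 ▸ one_ne_zero)
  have hd1 : ∑' x, ENNReal.ofReal (D x) = 1 := by
    rw [← ENNReal.ofReal_tsum_of_nonneg hD hsum, h1, ENNReal.ofReal_one]
  rw [sampExp_missingMass hD hsum, sampExp_goodTuring hD hn, hd1]
  exact ⟨ENNReal.toReal_tsum_mul_one_sub_pow_le_pred hd1 n,
    ENNReal.toReal_tsum_mul_one_sub_pow_pred_le hd1 (Nat.one_le_iff_ne_zero.mp hn)⟩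

theorem stmt15 {S : Type*} [Countable S] (D : S → ℝ)
    (hD : ∀ x, 0 ≤ D x) (hsum : Summable D) (h1 : ∑' x, D x = 1)
    (n : ℕ) (hn : 1 ≤ n) :
    sampExp D n (missingMass D) ≤ sampExp D n (fun s => goodTuring s) ∧
    sampExp D n (fun s => goodTuring s) ≤ sampExp D n (missingMass D) + 1 / n :=
  stmt15_general D hD h1 n hn
end
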